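/- arXiv:math/0611605 — 3 statements merged into one kernel-verified Lean document; each statement's English description precedes it below -/
import Mathlib

section
/- (Sato) Let (V, ⟨·,·⟩, J, A) be a compatible complex model with constant holomorphic sectional curvature c, i.e. A(x, Jx, Jx, x) = c·⟨x,x⟩² for all x ∈ V. Then for all x, y, z, w ∈ V: A(x,y,z,w) = (c/4){A₀(x,y,z,w) + A_J(x,y,z,w)} + (1/8){5A(x,y,z,w) − 3A(x,y,Jz,Jw) + A(x,z,Jw,Jy) − A(x,w,Jz,Jy) − A(x,Jz,w,Jy) + A(x,Jw,z,Jy)}, where A₀(x,y,z,w) := ⟨x,w⟩⟨y,z⟩ − ⟨x,z⟩⟨y,w⟩ and A_J(x,y,z,w) := ⟨x,Jw⟩⟨y,Jz⟩ − ⟨x,Jz⟩⟨y,Jw⟩ − 2⟨x,Jy⟩⟨z,Jw⟩. -/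
/-!
The quartic form `f (a, b, d, e) = A(a, Jb, Jd, e) - c⟨a, b⟩⟨d, e⟩` vanishes on the diagonal, and
pair symmetry together with `J`-invariance make it invariant under the Klein four-group acting on
its arguments. Polarization therefore gives a six-term identity in which `a` always sits in the
first slot. Taking it at `(x, y, z, w)`, `(x, y, Jz, Jw)` and `(x, Jy, z, Jw)` with coefficients
`1, -1, -2`, the inner-product side becomes `2c (A₀ + A_J)`, and the curvature side collapses to
Sato's bracket after two applications of the Bianchi identity in the last three slots of `A x`.
-/

open scoped RealInnerProductSpace

section Polarization

variable {M R : Type*} [Add M] [Field R] [CharZero R]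

/-- By the Klein four-symmetry, the sum of `f` over all `24` orderings of `a, b, d, e` is four
times this six-term sum (one term per coset), and by inclusion–exclusion it is the alternating sum
of `f v v v v` over the partial sums `v` of `a, b, d, e`. -/
theorem sum_six_eq_zero_of_diag_eq_zero (f : M → M → M → M → R)
    (hadd : ∀ a a' b d e, f (a + a') b d e = f a b d e + f a' b d e)
    (hswap : ∀ a b d e, f a b d e = f b a e d) (hrev : ∀ a b d e, f a b d e = f e d b a)
    (hdiag : ∀ v, f v v v v = 0) (a b d e : M) :
    f a b d e + f a b e d + f a d b e + f a d e b + f a e b d + f a e d b = 0 := by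
  have hcross : ∀ a b d e, f a b d e = f d e a b := fun a b d e => by rw [hswap, hrev]
  have hadd₂ : ∀ a b b' d e, f a (b + b') d e = f a b d e + f a b' d e := by
    intro a b b' d e; rw [hswap, hadd, hswap a b, hswap a b']
  have hadd₃ : ∀ a b d d' e, f a b (d + d') e = f a b d e + f a b d' e := by
    intro a b d d' e; rw [hcross, hadd, hcross a b d, hcross a b d']
  have hadd₄ : ∀ a b d e e', f a b d (e + e') = f a b d e + f a b d e' := by
    intro a b d e e'; rw [hrev, hadd, hrev a b d e, hrev a b d e']
  have hincl_excl : f (a+b+d+e) (a+b+d+e) (a+b+d+e) (a+b+d+e)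
      - f (a+b+d) (a+b+d) (a+b+d) (a+b+d) - f (a+b+e) (a+b+e) (a+b+e) (a+b+e)
      - f (a+d+e) (a+d+e) (a+d+e) (a+d+e) - f (b+d+e) (b+d+e) (b+d+e) (b+d+e)
      + f (a+b) (a+b) (a+b) (a+b) + f (a+d) (a+d) (a+d) (a+d) + f (a+e) (a+e) (a+e) (a+e)
      + f (b+d) (b+d) (b+d) (b+d) + f (b+e) (b+e) (b+e) (b+e) + f (d+e) (d+e) (d+e) (d+e)
      - f a a a a - f b b b b - f d d d d - f e e e e = 0 := by
    simp only [hdiag]; ring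
  -- `hswap`, `hrev`, `hcross` are permutative: `simp` sends each term to the least of its orbit.
  simp only [hadd, hadd₂, hadd₃, hadd₄, hswap, hrev, hcross] at hincl_excl ⊢
  linear_combination hincl_excl / 4

end Polarization

section Curvature

variable {R M : Type*} [CommRing R] [AddCommGroup M] [Module R M]

structure IsAlgCurvatureTensor (A : M →ₗ[R] M →ₗ[R] M →ₗ[R] M →ₗ[R] R) : Prop where
  antisymm : ∀ x y z w, A x y z w = -A y x z w
  pair_symm : ∀ x y z w, A x y z w = A z w x y
  bianchi : ∀ x y z w, A x y z w + A y z x w + A z x y w = 0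

namespace IsAlgCurvatureTensor

variable {A : M →ₗ[R] M →ₗ[R] M →ₗ[R] M →ₗ[R] R}

theorem antisymm_right (hA : IsAlgCurvatureTensor A) (x y z w : M) : A x y z w = -A x y w z := by
  rw [hA.pair_symm, hA.antisymm, ← hA.pair_symm]

theorem bianchi_right (hA : IsAlgCurvatureTensor A) (x a b c : M) :
    A x a b c + A x b c a + A x c a b = 0 := by
  have h := hA.bianchi a b c x
  rw [hA.pair_symm a b c x, hA.pair_symm b c a x, hA.pair_symm c a b x, hA.antisymm c x,
    hA.antisymm a x, hA.antisymm b x] at h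
  linear_combination -h

theorem apply_J_J_eq_swap (hA : IsAlgCurvatureTensor A) {J : M →ₗ[R] M} (hJ : ∀ a, J (J a) = -a)
    (hcompat : ∀ x y z w, A (J x) (J y) (J z) (J w) = A x y z w) (a b d e : M) :
    A a (J b) (J d) e = A b (J a) (J e) d := by
  rw [← hcompat, hJ, hJ]
  simp only [map_neg, LinearMap.neg_apply, neg_neg]
  rw [hA.antisymm, hA.antisymm_right, neg_neg]

theorem apply_J_J_eq_reverse (hA : IsAlgCurvatureTensor A) (J : M →ₗ[R] M) (a b d e : M) :
    A a (J b) (J d) e = A e (J d) (J b) a := by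
  rw [hA.pair_symm, hA.antisymm, hA.antisymm_right, neg_neg]

end IsAlgCurvatureTensor

/-- For `β = A a` this is a quarter of the full polarization of the holomorphic sectional
curvature `x ↦ A x (J x) (J x) x`. -/
def holSymm (β : M →ₗ[R] M →ₗ[R] M →ₗ[R] R) (J : M →ₗ[R] M) (b d e : M) : R :=
  β (J b) (J d) e + β (J b) (J e) d + β (J d) (J b) e + β (J d) (J e) b + β (J e) (J b) d
    + β (J e) (J d) b

theorem holSymm_combination (J : M →ₗ[R] M) (hJ : ∀ a, J (J a) = -a)
    (β : M →ₗ[R] M →ₗ[R] M →ₗ[R] R) (hanti : ∀ a b c, β a b c = -β a c b)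
    (hcyc : ∀ a b c, β a b c + β b c a + β c a b = 0) (y z w : M) :
    holSymm β J y z w - holSymm β J y (J z) (J w) - 2 * holSymm β J (J y) z (J w)
      = 3 * β y z w + 3 * β y (J z) (J w) - β z (J w) (J y) + β w (J z) (J y)
        + β (J z) w (J y) - β (J w) z (J y) := by
  simp only [holSymm, hJ, map_neg, LinearMap.neg_apply]
  linear_combination -hcyc y z w - hcyc y (J z) (J w) - hanti w z y + hanti w (J z) (J y)
    + hanti (J w) z (J y) + hanti (J w) (J z) y - 2 * hanti y z w + hanti (J y) z (J w)
    + hanti (J y) (J z) w + hanti z (J y) (J w) + 2 * hanti (J z) y (J w)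
    + hanti (J z) (J y) w

end Curvature

section Hermitian

variable {V : Type*} [NormedAddCommGroup V] [InnerProductSpace ℝ V]

theorem inner_J_left {J : V →ₗ[ℝ] V} (hJ : ∀ x, J (J x) = -x)
    (hJiso : ∀ x y : V, ⟪J x, J y⟫ = ⟪x, y⟫) (a b : V) : ⟪J a, b⟫ = -⟪a, J b⟫ := by
  rw [← hJiso a, hJ, inner_neg_right, neg_neg]

theorem holSymm_eq_of_constant_holomorphic_curvature {A : V →ₗ[ℝ] V →ₗ[ℝ] V →ₗ[ℝ] V →ₗ[ℝ] ℝ}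
    (hA : IsAlgCurvatureTensor A) {J : V →ₗ[ℝ] V} (hJ : ∀ x, J (J x) = -x)
    (hcompat : ∀ x y z w, A (J x) (J y) (J z) (J w) = A x y z w)
    {c : ℝ} (hQ : ∀ x : V, A x (J x) (J x) x = c * ⟪x, x⟫ ^ 2) (a b d e : V) :
    holSymm (A a) J b d e = 2 * c * (⟪a, b⟫ * ⟪d, e⟫ + ⟪a, d⟫ * ⟪b, e⟫ + ⟪a, e⟫ * ⟪b, d⟫) := by
  have h := sum_six_eq_zero_of_diag_eq_zero
    (fun a b d e => A a (J b) (J d) e - c * (⟪a, b⟫ * ⟪d, e⟫))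
    (fun a a' b d e => by simp only [map_add, LinearMap.add_apply, inner_add_left]; ring)
    (fun a b d e => by
      rw [hA.apply_J_J_eq_swap hJ hcompat, real_inner_comm b a, real_inner_comm e d])
    (fun a b d e => by
      rw [hA.apply_J_J_eq_reverse J, real_inner_comm b a, real_inner_comm e d]; ring)
    (fun v => by rw [hQ]; ring) a b d e
  simp only [holSymm]
  linear_combination h - c * (⟪a, b⟫ * real_inner_comm e d + ⟪a, d⟫ * real_inner_comm e b
    + ⟪a, e⟫ * real_inner_comm d b)

end Hermitian

theorem sato_formula_constant_holomorphic_curvature_general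
    {V : Type*} [NormedAddCommGroup V] [InnerProductSpace ℝ V]
    (J : V →ₗ[ℝ] V) (hJ : ∀ x, J (J x) = -x)
    (hJiso : ∀ x y : V, ⟪J x, J y⟫ = ⟪x, y⟫)
    (A : V →ₗ[ℝ] V →ₗ[ℝ] V →ₗ[ℝ] V →ₗ[ℝ] ℝ)
    (hAanti : ∀ x y z w : V, A x y z w = - A y x z w)
    (hApair : ∀ x y z w : V, A x y z w = A z w x y)
    (hAbianchi : ∀ x y z w : V, A x y z w + A y z x w + A z x y w = 0)
    (hcompat : ∀ x y z w : V, A (J x) (J y) (J z) (J w) = A x y z w)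
    (c : ℝ) (hQ : ∀ x : V, A x (J x) (J x) x = c * ⟪x, x⟫ ^ 2)
    (A₀ : V → V → V → V → ℝ)
    (hA₀ : ∀ x y z w, A₀ x y z w = ⟪x, w⟫ * ⟪y, z⟫ - ⟪x, z⟫ * ⟪y, w⟫)
    (AJ : V → V → V → V → ℝ)
    (hAJ : ∀ x y z w, AJ x y z w
      = ⟪x, J w⟫ * ⟪y, J z⟫ - ⟪x, J z⟫ * ⟪y, J w⟫ - 2 * ⟪x, J y⟫ * ⟪z, J w⟫) :
    ∀ x y z w : V,
      A x y z w =
        (c / 4) * (A₀ x y z w + AJ x y z w)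
        + (1 / 8) * (5 * A x y z w - 3 * A x y (J z) (J w) + A x z (J w) (J y)
            - A x w (J z) (J y) - A x (J z) w (J y) + A x (J w) z (J y)) := by
  intro x y z w
  have hA : IsAlgCurvatureTensor A := ⟨hAanti, hApair, hAbianchi⟩
  have key := holSymm_combination J hJ (A x) (hA.antisymm_right x) (hA.bianchi_right x) y z w
  simp only [holSymm_eq_of_constant_holomorphic_curvature hA hJ hcompat hQ, hJiso,
    inner_J_left hJ hJiso y z] at key
  rw [hA₀, hAJ]
  linear_combination -key / 8

/-- Sato: formula for the curvature tensor of a compatible complex model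
with constant holomorphic sectional curvature `c`. -/
theorem sato_formula_constant_holomorphic_curvature
    {V : Type*} [NormedAddCommGroup V] [InnerProductSpace ℝ V] [FiniteDimensional ℝ V]
    (J : V →ₗ[ℝ] V) (hJ : ∀ x, J (J x) = -x)
    (hJiso : ∀ x y : V, ⟪J x, J y⟫ = ⟪x, y⟫)
    (A : V →ₗ[ℝ] V →ₗ[ℝ] V →ₗ[ℝ] V →ₗ[ℝ] ℝ)
    (hAanti : ∀ x y z w : V, A x y z w = - A y x z w)
    (hApair : ∀ x y z w : V, A x y z w = A z w x y)
    (hAbianchi : ∀ x y z w : V, A x y z w + A y z x w + A z x y w = 0)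
    (hcompat : ∀ x y z w : V, A (J x) (J y) (J z) (J w) = A x y z w)
    (c : ℝ) (hQ : ∀ x : V, A x (J x) (J x) x = c * ⟪x, x⟫ ^ 2)
    (A₀ : V → V → V → V → ℝ)
    (hA₀ : ∀ x y z w, A₀ x y z w = ⟪x, w⟫ * ⟪y, z⟫ - ⟪x, z⟫ * ⟪y, w⟫)
    (AJ : V → V → V → V → ℝ)
    (hAJ : ∀ x y z w, AJ x y z w
      = ⟪x, J w⟫ * ⟪y, J z⟫ - ⟪x, J z⟫ * ⟪y, J w⟫ - 2 * ⟪x, J y⟫ * ⟪z, J w⟫) :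
    ∀ x y z w : V,
      A x y z w =
        (c / 4) * (A₀ x y z w + AJ x y z w)
        + (1 / 8) * (5 * A x y z w - 3 * A x y (J z) (J w) + A x z (J w) (J y)
            - A x w (J z) (J y) - A x (J z) w (J y) + A x (J w) z (J y)) :=
  sato_formula_constant_holomorphic_curvature_general J hJ hJiso A hAanti hApair hAbianchi hcompat c
    hQ A₀ hA₀ AJ hAJ
end

section
/- Let (V, ⟨·,·⟩, J, A) be a complex model. The complex Jacobi operator vanishes for every complex line, i.e. A(y,x,x,z) + A(y,Jx,Jx,z) = 0 for all x, y, z ∈ V, if and only if A(x,y,z,w) = −A(Jx,Jy,z,w) for all x, y, z, w ∈ V. -/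
open scoped RealInnerProductSpace

/-!
Symmetrising `A` in its middle slots gives `T(x,y,z,w) = A(x,y,z,w) + A(x,z,y,w)`, from which `A`
is recovered by `3 A(x,y,z,w) = T(x,y,z,w) - T(y,x,z,w)`. Polarised, the vanishing of the complex
Jacobi operator says exactly that `T(x,Jy,Jz,w) = -T(x,y,z,w)`. The tensor
`U(x,y,z,w) = T(x,y,z,w) + T(x,y,Jz,Jw)` is then antisymmetric in `(x,y)` (by the Bianchi identity)
and symmetric in `(y,z)` (as `J` moves freely between the middle slots of `T`), so `U = 0`. Thus `J`
is anti-invariant on the last pair of slots of `T`, hence of `A`, hence by pair symmetry on the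
first pair. The converse is a short computation with the Bianchi identity.
-/

theorem eq_zero_of_antisymm_of_symm {α R : Type*} [NonAssocRing R] [NoZeroDivisors R] [CharZero R]
    (f : α → α → α → R) (h₁₂ : ∀ a b c, f a b c = -f b a c) (h₂₃ : ∀ a b c, f a b c = f a c b)
    (a b c : α) : f a b c = 0 := by
  rw [← CharZero.eq_neg_self_iff]
  calc f a b c = -f b a c := h₁₂ a b c
    _ = -f b c a := by rw [h₂₃ b a c]
    _ = f c b a := by rw [h₁₂ b c a, neg_neg]
    _ = f c a b := h₂₃ c b a
    _ = -f a c b := h₁₂ c a b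
    _ = -f a b c := by rw [h₂₃ a c b]

section

variable {R V : Type*} [CommRing R] [AddCommGroup V] [Module R V]

structure IsCurvatureTensor (A : V →ₗ[R] V →ₗ[R] V →ₗ[R] V →ₗ[R] R) : Prop where
  antisymm : ∀ x y z w, A x y z w = -A y x z w
  pair_symm : ∀ x y z w, A x y z w = A z w x y
  bianchi : ∀ x y z w, A x y z w + A y z x w + A z x y w = 0

def ComplexJacobiVanishes (A : V →ₗ[R] V →ₗ[R] V →ₗ[R] V →ₗ[R] R) (J : V →ₗ[R] V) : Prop :=
  ∀ x y z, A y x x z + A y (J x) (J x) z = 0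

def symmMiddle (A : V →ₗ[R] V →ₗ[R] V →ₗ[R] V →ₗ[R] R) (x y z w : V) : R :=
  A x y z w + A x z y w

theorem symmMiddle_comm (A : V →ₗ[R] V →ₗ[R] V →ₗ[R] V →ₗ[R] R) (x y z w : V) :
    symmMiddle A x y z w = symmMiddle A x z y w :=
  add_comm _ _

theorem ComplexJacobiVanishes.symmMiddle_map_map {A : V →ₗ[R] V →ₗ[R] V →ₗ[R] V →ₗ[R] R}
    {J : V →ₗ[R] V} (hC : ComplexJacobiVanishes A J) (x y z w : V) :
    symmMiddle A x (J y) (J z) w = -symmMiddle A x y z w := by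
  have h := hC (y + z) x w
  simp only [map_add, LinearMap.add_apply] at h
  unfold symmMiddle
  linear_combination h - hC y x w - hC z x w

namespace IsCurvatureTensor

variable {A : V →ₗ[R] V →ₗ[R] V →ₗ[R] V →ₗ[R] R}

theorem antisymm_right (hA : IsCurvatureTensor A) (x y z w : V) :
    A x y z w = -A x y w z := by
  rw [hA.pair_symm x y z w, hA.antisymm z w x y, hA.pair_symm w z x y]

theorem bianchi_right (hA : IsCurvatureTensor A) (x y z w : V) :
    A x y z w + A x z w y + A x w y z = 0 := by
  linear_combination hA.pair_symm x y z w + hA.antisymm_right z w x y + hA.pair_symm x z w y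
    + hA.antisymm_right w y x z + hA.pair_symm x w y z + hA.antisymm_right y z x w
    - hA.bianchi y z w x

theorem symmMiddle_pair_swap (hA : IsCurvatureTensor A) (x y z w : V) :
    symmMiddle A x y z w = symmMiddle A y x w z := by
  unfold symmMiddle
  linear_combination hA.antisymm x y z w - hA.antisymm_right y x z w + hA.pair_symm x z y w

theorem symmMiddle_cyclic (hA : IsCurvatureTensor A) (x y z w : V) :
    symmMiddle A x y z w + symmMiddle A x z w y + symmMiddle A x w y z = 0 := by
  unfold symmMiddle
  linear_combination hA.bianchi_right x y z w + hA.bianchi_right x z y w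

theorem three_mul_eq_symmMiddle_sub (hA : IsCurvatureTensor A) (x y z w : V) :
    3 * A x y z w = symmMiddle A x y z w - symmMiddle A y x z w := by
  unfold symmMiddle
  linear_combination hA.antisymm x y z w + hA.bianchi x y z w - hA.antisymm z x y w

theorem symmMiddle_map_map_right [NoZeroDivisors R] [CharZero R] (hA : IsCurvatureTensor A)
    {J : V →ₗ[R] V} (hJ : ∀ x, J (J x) = -x) (hC : ComplexJacobiVanishes A J) (x y z w : V) :
    symmMiddle A x y (J z) (J w) = -symmMiddle A x y z w := by
  have move_J : ∀ a b c d, symmMiddle A a (J b) c d = symmMiddle A a b (J c) d := fun a b c d => by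
    have h := hC.symmMiddle_map_map a b (J c) d
    simp only [symmMiddle, hJ, map_neg, LinearMap.neg_apply] at h ⊢
    linear_combination -h
  set U : V → V → V → V → R := fun a b c d => symmMiddle A a b c d + symmMiddle A a b (J c) (J d)
  have U_antisymm_right : ∀ a b c d, U a b c d = -U a b d c := fun a b c d => by
    linear_combination hA.symmMiddle_cyclic a b c d - symmMiddle_comm A a d b c
      + hA.symmMiddle_cyclic a b (J c) (J d) - symmMiddle_comm A a (J d) b (J c)
      - hC.symmMiddle_map_map a c d b
  have U_antisymm_left : ∀ a b c d, U a b c d = -U b a c d := fun a b c d => by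
    rw [U_antisymm_right b a c d, neg_neg]
    linear_combination hA.symmMiddle_pair_swap a b c d + hA.symmMiddle_pair_swap a b (J c) (J d)
  have U_symm_middle : ∀ a b c d, U a b c d = U a c b d := fun a b c d => by
    linear_combination symmMiddle_comm A a b c d - move_J a b c (J d)
      + symmMiddle_comm A a (J b) c (J d)
  have hU := eq_zero_of_antisymm_of_symm (fun a b c => U a b c w)
    (fun a b c => U_antisymm_left a b c w) (fun a b c => U_symm_middle a b c w) x y z
  linear_combination hU

theorem map_map_right [NoZeroDivisors R] [CharZero R] (hA : IsCurvatureTensor A)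
    {J : V →ₗ[R] V} (hJ : ∀ x, J (J x) = -x) (hC : ComplexJacobiVanishes A J) (x y z w : V) :
    A x y (J z) (J w) = -A x y z w := by
  have h : ((3 : ℕ) : R) * A x y (J z) (J w) = (3 : ℕ) * -A x y z w := by
    push_cast
    linear_combination hA.three_mul_eq_symmMiddle_sub x y (J z) (J w)
      + hA.symmMiddle_map_map_right hJ hC x y z w - hA.symmMiddle_map_map_right hJ hC y x z w
      + hA.three_mul_eq_symmMiddle_sub x y z w
  exact (nat_mul_inj h).resolve_left three_ne_zero

theorem complexJacobiVanishes [NoZeroDivisors R] [CharZero R] (hA : IsCurvatureTensor A)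
    {J : V →ₗ[R] V} (hJ : ∀ x, J (J x) = -x)
    (hK : ∀ x y z w, A x y z w = -A (J x) (J y) z w) : ComplexJacobiVanishes A J := by
  have move_J : ∀ a b c d, A a (J b) c d = A (J a) b c d := fun a b c d => by
    rw [hK a (J b)]
    simp only [hJ, map_neg, LinearMap.neg_apply, neg_neg]
  intro x y z
  have hx : A x (J x) (J y) z = 0 :=
    CharZero.eq_neg_self_iff.mp ((move_J x x (J y) z).trans (hA.antisymm _ _ _ _))
  linear_combination move_J y x (J x) z + hA.bianchi x (J x) (J y) z - hx
    - hA.antisymm (J x) (J y) x z + hK y x x z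

end IsCurvatureTensor

end

theorem complexJacobi_zero_iff_anti_general
    {V : Type*} [NormedAddCommGroup V] [InnerProductSpace ℝ V]
    (J : V →ₗ[ℝ] V) (hJ : ∀ x, J (J x) = -x)
    (A : V →ₗ[ℝ] V →ₗ[ℝ] V →ₗ[ℝ] V →ₗ[ℝ] ℝ)
    (hAanti : ∀ x y z w : V, A x y z w = - A y x z w)
    (hApair : ∀ x y z w : V, A x y z w = A z w x y)
    (hAbianchi : ∀ x y z w : V, A x y z w + A y z x w + A z x y w = 0) :
    (∀ x y z : V, A y x x z + A y (J x) (J x) z = 0) ↔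
      (∀ x y z w : V, A x y z w = - A (J x) (J y) z w) := by
  have hA : IsCurvatureTensor A := ⟨hAanti, hApair, hAbianchi⟩
  refine ⟨fun hC x y z w => ?_, hA.complexJacobiVanishes hJ⟩
  rw [hApair (J x), hA.map_map_right hJ hC, ← hApair, neg_neg]

/-- the complex Jacobi operator vanishes for every complex line iff
`A(x,y,z,w) = -A(Jx,Jy,z,w)` for all `x,y,z,w`. -/
theorem complexJacobi_zero_iff_anti
    {V : Type*} [NormedAddCommGroup V] [InnerProductSpace ℝ V] [FiniteDimensional ℝ V]
    (J : V →ₗ[ℝ] V) (hJ : ∀ x, J (J x) = -x)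
    (hJiso : ∀ x y : V, ⟪J x, J y⟫ = ⟪x, y⟫)
    (A : V →ₗ[ℝ] V →ₗ[ℝ] V →ₗ[ℝ] V →ₗ[ℝ] ℝ)
    (hAanti : ∀ x y z w : V, A x y z w = - A y x z w)
    (hApair : ∀ x y z w : V, A x y z w = A z w x y)
    (hAbianchi : ∀ x y z w : V, A x y z w + A y z x w + A z x y w = 0) :
    (∀ x y z : V, A y x x z + A y (J x) (J x) z = 0) ↔
      (∀ x y z w : V, A x y z w = - A (J x) (J y) z w) :=
  complexJacobi_zero_iff_anti_general J hJ A hAanti hApair hAbianchi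
end

section
/- Let (V, ⟨·,·⟩, J, A) be a complex model such that the complex Jacobi operator vanishes for every complex line, i.e. A(y,x,x,z) + A(y,Jx,Jx,z) = 0 for all x, y, z ∈ V. Then the model is compatible: A(Jx, Jy, Jz, Jw) = A(x, y, z, w) for all x, y, z, w ∈ V. -/
/-!
Polarizing `A(y,x,x,z) + A(y,Jx,Jx,z) = 0` shows that the symmetrized Jacobi form
`P(y;x,w;z) = A(y,x,w,z) + A(y,w,x,z)` changes sign when `J` is applied to its two middle
arguments. Since `P` is also symmetric under `(y,x,w,z) ↦ (x,y,z,w)`, applying this twice moves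
`J` onto all four arguments, so `P` is `J`-invariant. The curvature identities recover `A` from
`P` as `3 A(a,b,c,d) = P(a;b,c;d) - P(a;b,d;c)`, hence `A` is `J`-invariant as well.
-/

open scoped RealInnerProductSpace

section

variable {R M : Type*} [CommRing R] [AddCommGroup M] [Module R M]

structure IsAlgebraicCurvatureTensor (A : M →ₗ[R] M →ₗ[R] M →ₗ[R] M →ₗ[R] R) : Prop where
  antisymm : ∀ x y z w, A x y z w = -A y x z w
  pair_symm : ∀ x y z w, A x y z w = A z w x y
  bianchi : ∀ x y z w, A x y z w + A y z x w + A z x y w = 0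

def jacobiPolar (A : M →ₗ[R] M →ₗ[R] M →ₗ[R] M →ₗ[R] R) (y x w z : M) : R :=
  A y x w z + A y w x z

theorem jacobiPolar_add_jacobiPolar_map_eq_zero {A : M →ₗ[R] M →ₗ[R] M →ₗ[R] M →ₗ[R] R}
    {J : M →ₗ[R] M} (hvan : ∀ x y z, A y x x z + A y (J x) (J x) z = 0) (y x w z : M) :
    jacobiPolar A y x w z + jacobiPolar A y (J x) (J w) z = 0 := by
  have hsum := hvan (x + w) y z
  simp only [map_add, LinearMap.add_apply] at hsum
  unfold jacobiPolar
  linear_combination hsum - hvan x y z - hvan w y z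

namespace IsAlgebraicCurvatureTensor

variable {A : M →ₗ[R] M →ₗ[R] M →ₗ[R] M →ₗ[R] R} (hA : IsAlgebraicCurvatureTensor A)
include hA

theorem antisymm_right (a b c d : M) : A a b d c = -A a b c d := by
  linear_combination hA.pair_symm a b d c + hA.antisymm d c a b - hA.pair_symm c d a b

theorem swap_middle (a b c d : M) : A a c b d = A a b c d + A a d b c := by
  linear_combination -hA.bianchi a b c d + hA.antisymm a c b d + hA.pair_symm b c a d

theorem jacobiPolar_swap (y x w z : M) : jacobiPolar A y x w z = jacobiPolar A x y z w := by
  unfold jacobiPolar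
  linear_combination hA.swap_middle y x w z - hA.swap_middle x y z w + 2 * hA.antisymm y x w z
    - 2 * hA.antisymm_right x y z w + hA.pair_symm y z x w

theorem three_mul_eq_jacobiPolar_sub (a b c d : M) :
    3 * A a b c d = jacobiPolar A a b c d - jacobiPolar A a b d c := by
  unfold jacobiPolar
  linear_combination -hA.swap_middle a b c d + hA.antisymm_right a b c d

theorem jacobiPolar_map_eq {J : M →ₗ[R] M}
    (hvan : ∀ x y z, A y x x z + A y (J x) (J x) z = 0) (a b c d : M) :
    jacobiPolar A (J a) (J b) (J c) (J d) = jacobiPolar A a b c d := by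
  calc jacobiPolar A (J a) (J b) (J c) (J d)
      = jacobiPolar A (J b) (J a) (J d) (J c) := hA.jacobiPolar_swap _ _ _ _
    _ = -jacobiPolar A (J b) a d (J c) :=
        eq_neg_of_add_eq_zero_right (jacobiPolar_add_jacobiPolar_map_eq_zero hvan _ _ _ _)
    _ = -jacobiPolar A a (J b) (J c) d := by rw [hA.jacobiPolar_swap]
    _ = jacobiPolar A a b c d :=
        neg_eq_of_add_eq_zero_left (jacobiPolar_add_jacobiPolar_map_eq_zero hvan _ _ _ _)

theorem map_eq_of_complexJacobi_eq_zero [IsDomain R] [CharZero R] {J : M →ₗ[R] M}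
    (hvan : ∀ x y z, A y x x z + A y (J x) (J x) z = 0) (x y z w : M) :
    A (J x) (J y) (J z) (J w) = A x y z w := by
  refine mul_left_cancel₀ (by norm_num : (3 : R) ≠ 0) ?_
  rw [hA.three_mul_eq_jacobiPolar_sub, hA.three_mul_eq_jacobiPolar_sub,
    hA.jacobiPolar_map_eq hvan, hA.jacobiPolar_map_eq hvan]

end IsAlgebraicCurvatureTensor

end

theorem complexJacobi_zero_implies_compatible_general
    {V : Type*} [NormedAddCommGroup V] [InnerProductSpace ℝ V]
    (J : V →ₗ[ℝ] V)
    (A : V →ₗ[ℝ] V →ₗ[ℝ] V →ₗ[ℝ] V →ₗ[ℝ] ℝ)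
    (hAanti : ∀ x y z w : V, A x y z w = - A y x z w)
    (hApair : ∀ x y z w : V, A x y z w = A z w x y)
    (hAbianchi : ∀ x y z w : V, A x y z w + A y z x w + A z x y w = 0)
    (hvan : ∀ x y z : V, A y x x z + A y (J x) (J x) z = 0) :
    ∀ x y z w : V, A (J x) (J y) (J z) (J w) = A x y z w :=
  (IsAlgebraicCurvatureTensor.mk hAanti hApair hAbianchi).map_eq_of_complexJacobi_eq_zero hvan

/-- if the complex Jacobi operator vanishes for every complex line, then
the complex model is compatible. -/
theorem complexJacobi_zero_implies_compatible
    {V : Type*} [NormedAddCommGroup V] [InnerProductSpace ℝ V] [FiniteDimensional ℝ V]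
    (J : V →ₗ[ℝ] V) (hJ : ∀ x, J (J x) = -x)
    (hJiso : ∀ x y : V, ⟪J x, J y⟫ = ⟪x, y⟫)
    (A : V →ₗ[ℝ] V →ₗ[ℝ] V →ₗ[ℝ] V →ₗ[ℝ] ℝ)
    (hAanti : ∀ x y z w : V, A x y z w = - A y x z w)
    (hApair : ∀ x y z w : V, A x y z w = A z w x y)
    (hAbianchi : ∀ x y z w : V, A x y z w + A y z x w + A z x y w = 0)
    (hvan : ∀ x y z : V, A y x x z + A y (J x) (J x) z = 0) :
    ∀ x y z w : V, A (J x) (J y) (J z) (J w) = A x y z w :=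
  complexJacobi_zero_implies_compatible_general J A hAanti hApair hAbianchi hvan
end
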